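/- Regard ℂ[x_0, …, x_{n-1}] as the subring of ℂ[x_0, …, x_n] of polynomials not involving x_n. Then: (existence) for every p ∈ ℂ[x_0,…,x_n] there exist q_0, …, q_{k-1} ∈ ℂ[x_0,…,x_{n-1}] such that p − (q_0 + x_n·q_1 + … + x_n^{k-1}·q_{k-1}) ∈ I; and (uniqueness) if q_0, …, q_{k-1} ∈ ℂ[x_0,…,x_{n-1}] satisfy q_0 + x_n·q_1 + … + x_n^{k-1}·q_{k-1} ∈ I, then every q_j belongs to I'. (That is, the homogeneous coordinate ring ℂ[x_0,…,x_n]/I is a free module over ℂ[x_0,…,x_{n-1}]/I' with basis 1, x_n, …, x_n^{k-1}.) -/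

import Mathlib

noncomputable section

/-- The polynomials `P₁, …, P_{n-1}` of the generalized Fermat system of type `(k,n)`:
`P₁ = x₀^k + x₁^k + x₂^k` and `P_{j+1} = λ_j·x₀^k + x₁^k + x_{j+2}^k` for `j = 1, …, n-2`
(0-indexed below). -/
def gfPoly (k n : ℕ) (hn : 3 ≤ n) (lam : Fin (n - 2) → ℂ) :
    Fin (n - 1) → MvPolynomial (Fin (n + 1)) ℂ := fun i =>
  if (i : ℕ) = 0 then
    MvPolynomial.X ⟨0, by omega⟩ ^ k + MvPolynomial.X ⟨1, by omega⟩ ^ k +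
      MvPolynomial.X ⟨2, by omega⟩ ^ k
  else
    MvPolynomial.C (lam ⟨(i : ℕ) - 1, by have := i.2; omega⟩) *
        MvPolynomial.X ⟨0, by omega⟩ ^ k +
      MvPolynomial.X ⟨1, by omega⟩ ^ k +
      MvPolynomial.X ⟨(i : ℕ) + 2, by have := i.2; omega⟩ ^ k

/-- The polynomials `P₁, …, P_{n-2}` of the lower system, as polynomials in `x₀, …, x_{n-1}`. -/
def gfPolyLow (k n : ℕ) (hn : 3 ≤ n) (lam : Fin (n - 2) → ℂ) :
    Fin (n - 2) → MvPolynomial (Fin n) ℂ := fun i =>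
  if (i : ℕ) = 0 then
    MvPolynomial.X ⟨0, by omega⟩ ^ k + MvPolynomial.X ⟨1, by omega⟩ ^ k +
      MvPolynomial.X ⟨2, by omega⟩ ^ k
  else
    MvPolynomial.C (lam ⟨(i : ℕ) - 1, by have := i.2; omega⟩) *
        MvPolynomial.X ⟨0, by omega⟩ ^ k +
      MvPolynomial.X ⟨1, by omega⟩ ^ k +
      MvPolynomial.X ⟨(i : ℕ) + 2, by have := i.2; omega⟩ ^ k

/-! Read `x_n` as the variable of `A[X]`, `A = ℂ[x₀, …, x_{n-1}]`. The last equation is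
`P_{n-1} = X^k + c` with `c = λ_{n-2}·x₀^k + x₁^k ∈ A`, and the others lie in `A`, so `I`
becomes `(X^k + c) + I'·A[X]`. Modulo `I'` the polynomial `X^k + c` stays monic of degree `k`,
and `(A/I')[X]/(X^k + c)` is free over `A/I'` with basis `1, X, …, X^{k-1}`. -/

namespace Polynomial

variable {A : Type*} [CommRing A]

lemma _root_.AdjoinRoot.mk_sum_X_pow_mul_C (g : A[X]) {k : ℕ} (q : Fin k → A) :
    AdjoinRoot.mk g (∑ j : Fin k, X ^ (j : ℕ) * C (q j)) =
      ∑ j, q j • AdjoinRoot.root g ^ (j : ℕ) := by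
  simp only [map_sum, map_mul, map_pow, AdjoinRoot.mk_X, AdjoinRoot.mk_C, Algebra.smul_def,
    AdjoinRoot.algebraMap_eq, mul_comm]

lemma _root_.AdjoinRoot.exists_basis_root_pow {g : A[X]} (hg : g.Monic) :
    ∃ b : Module.Basis (Fin g.natDegree) A (AdjoinRoot g),
      ∀ i, b i = AdjoinRoot.root g ^ (i : ℕ) :=
  ⟨(AdjoinRoot.powerBasis' hg).basis, (AdjoinRoot.powerBasis' hg).basis_eq_pow⟩

lemma Monic.exists_sub_sum_X_pow_mul_C_mem_span {g : A[X]} (hg : g.Monic) {k : ℕ}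
    (hgk : g.natDegree = k) (f : A[X]) :
    ∃ q : Fin k → A, f - ∑ j : Fin k, X ^ (j : ℕ) * C (q j) ∈ Ideal.span {g} := by
  subst hgk
  obtain ⟨b, hb⟩ := AdjoinRoot.exists_basis_root_pow hg
  refine ⟨b.repr (AdjoinRoot.mk g f), ?_⟩
  rw [Ideal.mem_span_singleton, ← AdjoinRoot.mk_eq_zero, map_sub,
    AdjoinRoot.mk_sum_X_pow_mul_C, sub_eq_zero]
  simpa only [hb] using (b.sum_repr (AdjoinRoot.mk g f)).symm

lemma Monic.eq_zero_of_sum_X_pow_mul_C_mem_span {g : A[X]} (hg : g.Monic) {k : ℕ}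
    (hgk : g.natDegree = k) (q : Fin k → A)
    (h : ∑ j : Fin k, X ^ (j : ℕ) * C (q j) ∈ Ideal.span {g}) : q = 0 := by
  subst hgk
  obtain ⟨b, hb⟩ := AdjoinRoot.exists_basis_root_pow hg
  rw [Ideal.mem_span_singleton, ← AdjoinRoot.mk_eq_zero, AdjoinRoot.mk_sum_X_pow_mul_C] at h
  funext j
  refine Fintype.linearIndependent_iff.mp b.linearIndependent q ?_ j
  simpa only [hb] using h

lemma Monic.mem_of_sum_X_pow_mul_C_mem_span_sup {g : A[X]} (hg : g.Monic) {k : ℕ}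
    (hgk : g.natDegree = k) {J : Ideal A} (q : Fin k → A)
    (h : ∑ j : Fin k, X ^ (j : ℕ) * C (q j) ∈ Ideal.span {g} ⊔ J.map C) (j : Fin k) :
    q j ∈ J := by
  rcases subsingleton_or_nontrivial (A ⧸ J) with hJ | hJ
  · rw [Ideal.Quotient.subsingleton_iff.mp hJ]; trivial
  set φ := mapRingHom (Ideal.Quotient.mk J)
  have hker : J.map C = RingHom.ker φ := by rw [ker_mapRingHom, Ideal.mk_ker]
  have hφ : φ (∑ j : Fin k, X ^ (j : ℕ) * C (q j)) ∈ Ideal.span {φ g} := by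
    have := Ideal.mem_map_of_mem φ h
    rwa [hker, Ideal.map_sup, Ideal.map_span, Set.image_singleton,
      (Ideal.map_eq_bot_iff_le_ker φ).mpr le_rfl, sup_bot_eq] at this
  have := (hg.map _).eq_zero_of_sum_X_pow_mul_C_mem_span
    ((hg.natDegree_map (Ideal.Quotient.mk J)).trans hgk) (fun j => Ideal.Quotient.mk J (q j))
    (by simpa [φ] using hφ)
  exact Ideal.Quotient.eq_zero_iff_mem.mp (congrFun this j)

end Polynomial

namespace MvPolynomial

variable (R : Type*) [CommSemiring R] (n : ℕ)

def finSuccLastEquiv : MvPolynomial (Fin (n + 1)) R ≃ₐ[R] Polynomial (MvPolynomial (Fin n) R) :=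
  (renameEquiv R finSuccEquivLast).trans (optionEquivLeft R (Fin n))

variable {R n}

@[simp]
lemma finSuccLastEquiv_X_last : finSuccLastEquiv R n (X (Fin.last n)) = Polynomial.X := by
  simp [finSuccLastEquiv, optionEquivLeft_X_none]

@[simp]
lemma finSuccLastEquiv_rename_castSucc (p : MvPolynomial (Fin n) R) :
    finSuccLastEquiv R n (rename Fin.castSucc p) = Polynomial.C p := by
  induction p using MvPolynomial.induction_on with
  | C a => simp [finSuccLastEquiv, optionEquivLeft_C]
  | add p q hp hq => simp only [map_add, hp, hq]
  | mul_X p i hp =>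
    rw [map_mul, map_mul, hp, rename_X]
    simp [finSuccLastEquiv, optionEquivLeft_X_some]

end MvPolynomial

open MvPolynomial

section GeneralizedFermat

variable (k : ℕ) {n : ℕ} (hn : 3 ≤ n) (lam : Fin (n - 2) → ℂ)

def gfPolyLastConst : MvPolynomial (Fin n) ℂ :=
  C (lam ⟨n - 3, by omega⟩) * X ⟨0, by omega⟩ ^ k + X ⟨1, by omega⟩ ^ k

lemma gfPoly_eq_rename_gfPolyLow (i : Fin (n - 1)) (hi : (i : ℕ) < n - 2) :
    gfPoly k n hn lam i = rename Fin.castSucc (gfPolyLow k n hn lam ⟨i, hi⟩) := by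
  unfold gfPoly gfPolyLow
  split_ifs <;> simp

lemma gfPoly_last :
    gfPoly k n hn lam ⟨n - 2, by omega⟩ =
      X (Fin.last n) ^ k + rename Fin.castSucc (gfPolyLastConst k hn lam) := by
  obtain ⟨m, rfl⟩ : ∃ m, n = m + 3 := ⟨n - 3, by omega⟩
  simp [gfPoly, gfPolyLastConst, Fin.last]
  ring

lemma range_gfPoly : Set.range (gfPoly k n hn lam) =
    insert (X (Fin.last n) ^ k + rename Fin.castSucc (gfPolyLastConst k hn lam))
      (rename Fin.castSucc '' Set.range (gfPolyLow k n hn lam)) := by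
  ext p
  constructor
  · rintro ⟨i, rfl⟩
    by_cases hi : (i : ℕ) < n - 2
    · exact Or.inr ⟨_, ⟨⟨i, hi⟩, rfl⟩, (gfPoly_eq_rename_gfPolyLow k hn lam i hi).symm⟩
    · left
      rw [show i = ⟨n - 2, by omega⟩ from Fin.ext (by simp; omega), gfPoly_last]
  · rintro (rfl | ⟨_, ⟨i, rfl⟩, rfl⟩)
    · exact ⟨_, gfPoly_last k hn lam⟩
    · exact ⟨⟨i, by omega⟩, gfPoly_eq_rename_gfPolyLow k hn lam _ i.2⟩

lemma mem_span_gfPoly_iff (p : MvPolynomial (Fin (n + 1)) ℂ) :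
    p ∈ Ideal.span (Set.range (gfPoly k n hn lam)) ↔
      finSuccLastEquiv ℂ n p ∈
        Ideal.span {Polynomial.X ^ k + Polynomial.C (gfPolyLastConst k hn lam)} ⊔
          (Ideal.span (Set.range (gfPolyLow k n hn lam))).map Polynomial.C := by
  rw [← Ideal.apply_mem_of_equiv_iff (f := (finSuccLastEquiv ℂ n).toRingEquiv), Ideal.map_span,
    Ideal.map_span, range_gfPoly, Set.image_insert_eq, Set.image_image, Ideal.span_insert]
  simp

end GeneralizedFermat

theorem generalized_fermat_coordinate_ring_free_module (k n : ℕ) (hk : 2 ≤ k) (hn : 3 ≤ n)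
    (lam : Fin (n - 2) → ℂ) :
    (∀ p : MvPolynomial (Fin (n + 1)) ℂ, ∃ q : Fin k → MvPolynomial (Fin n) ℂ,
        p - ∑ j : Fin k,
            MvPolynomial.X (⟨n, by omega⟩ : Fin (n + 1)) ^ (j : ℕ) *
              MvPolynomial.rename Fin.castSucc (q j) ∈
          Ideal.span (Set.range (gfPoly k n hn lam))) ∧
      ∀ q : Fin k → MvPolynomial (Fin n) ℂ,
        (∑ j : Fin k,
            MvPolynomial.X (⟨n, by omega⟩ : Fin (n + 1)) ^ (j : ℕ) *
              MvPolynomial.rename Fin.castSucc (q j)) ∈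
            Ideal.span (Set.range (gfPoly k n hn lam)) →
          ∀ j, q j ∈ Ideal.span (Set.range (gfPolyLow k n hn lam)) := by
  have hg : (Polynomial.X ^ k + Polynomial.C (gfPolyLastConst k hn lam)).Monic :=
    Polynomial.monic_X_pow_add_C _ (by omega)
  have hgk := Polynomial.natDegree_X_pow_add_C (n := k) (r := gfPolyLastConst k hn lam)
  have hsum (q : Fin k → MvPolynomial (Fin n) ℂ) :
      finSuccLastEquiv ℂ n
          (∑ j : Fin k, X ⟨n, by omega⟩ ^ (j : ℕ) * rename Fin.castSucc (q j)) =
        ∑ j : Fin k, Polynomial.X ^ (j : ℕ) * Polynomial.C (q j) := by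
    have hlast : (⟨n, by omega⟩ : Fin (n + 1)) = Fin.last n := rfl
    simp only [hlast, map_sum, map_mul, map_pow, finSuccLastEquiv_X_last,
      finSuccLastEquiv_rename_castSucc]
  refine ⟨fun p => ?_, fun q hq j => ?_⟩
  · obtain ⟨q, hq⟩ := hg.exists_sub_sum_X_pow_mul_C_mem_span hgk (finSuccLastEquiv ℂ n p)
    refine ⟨q, (mem_span_gfPoly_iff k hn lam _).mpr ?_⟩
    rw [map_sub, hsum]
    exact Ideal.mem_sup_left hq
  · have := (mem_span_gfPoly_iff k hn lam _).mp hq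
    rw [hsum] at this
    exact hg.mem_of_sum_X_pow_mul_C_mem_span_sup hgk q this j
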